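/- arXiv:2407.13713 — 6 statements merged into one kernel-verified Lean document; each statement's English description precedes it below -/
import Mathlib

section
/- Let U be a compact topological space and X a real normed linear space. Let f, g ∈ C(U, X) be non-zero. Then f ⊥_B g (i.e., ‖f + λg‖_U ≥ ‖f‖_U for all real λ) if and only if there exist u₁, u₂ ∈ M_f such that g(u₁) ∈ f(u₁)⁺ and g(u₂) ∈ f(u₂)⁻. -/
open Set

private lemma convex_norm_aux' {X : Type*} [NormedAddCommGroup X] [NormedSpace ℝ X]
    (x y : X) {s t : ℝ} (hs : 0 ≤ s) (hst : s ≤ t) (ht : 0 < t) :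
    ‖x + s • y‖ ≤ (1 - s / t) * ‖x‖ + (s / t) * ‖x + t • y‖ := by
  have hr0 : 0 ≤ s / t := div_nonneg hs ht.le
  have hr1 : s / t ≤ 1 := (div_le_one ht).2 hst
  have key : x + s • y = (1 - s / t) • x + (s / t) • (x + t • y) := by
    have h : (s / t) * t = s := div_mul_cancel₀ s ht.ne'
    rw [smul_add, smul_smul, h]
    module
  rw [key]
  calc ‖(1 - s / t) • x + (s / t) • (x + t • y)‖
      ≤ ‖(1 - s / t) • x‖ + ‖(s / t) • (x + t • y)‖ := norm_add_le _ _
    _ = (1 - s / t) * ‖x‖ + (s / t) * ‖x + t • y‖ := by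
        rw [norm_smul, norm_smul, Real.norm_of_nonneg (by linarith),
          Real.norm_of_nonneg hr0]

private lemma exists_norm_attain' {U : Type*} [TopologicalSpace U] [CompactSpace U]
    [Nonempty U] {X : Type*} [NormedAddCommGroup X] (h : C(U, X)) :
    ∃ u, ‖h u‖ = ‖h‖ ∧ ∀ v, ‖h v‖ ≤ ‖h u‖ := by
  obtain ⟨u, -, hu⟩ := isCompact_univ.exists_isMaxOn univ_nonempty
    (h.continuous.norm.continuousOn)
  have hmax : ∀ v, ‖h v‖ ≤ ‖h u‖ := fun v => hu (mem_univ v)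
  refine ⟨u, le_antisymm (h.norm_coe_le_norm u) ?_, hmax⟩
  exact (h.norm_le (norm_nonneg _)).2 hmax

private lemma forward_aux' {U : Type*} [TopologicalSpace U] [CompactSpace U]
    {X : Type*} [NormedAddCommGroup X] [NormedSpace ℝ X]
    (f g : C(U, X)) (hf : f ≠ 0)
    (h : ∀ t : ℝ, 0 ≤ t → ‖f‖ ≤ ‖f + t • g‖) :
    ∃ u, ‖f u‖ = ‖f‖ ∧ ∀ t : ℝ, 0 ≤ t → ‖f u‖ ≤ ‖f u + t • g u‖ := by
  have hU : Nonempty U := by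
    rcases isEmpty_or_nonempty U with hE | hN
    · exact absurd (ContinuousMap.ext fun u => hE.elim u) hf
    · exact hN
  have hfpos : (0:ℝ) < ‖f‖ := norm_pos_iff.2 hf
  by_contra hcon
  push_neg at hcon
  -- hcon : ∀ u, ‖f u‖ = ‖f‖ → ∃ t, 0 ≤ t ∧ ‖f u + t • g u‖ < ‖f u‖
  set S : Set U := {u | ‖f u‖ = ‖f‖} with hS
  have hSclosed : IsClosed S := isClosed_eq f.continuous.norm continuous_const
  have hScompact : IsCompact S := hSclosed.isCompact
  obtain ⟨u₀, hu₀, -⟩ := exists_norm_attain' f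
  have hSne : S.Nonempty := ⟨u₀, hu₀⟩
  -- choose times and neighborhoods
  have hchoice : ∀ u : S, ∃ t : ℝ, 0 < t ∧ ‖f (u : U) + t • g (u : U)‖ < ‖f‖ := by
    rintro ⟨u, hu⟩
    obtain ⟨t, ht0, htlt⟩ := hcon u hu
    refine ⟨t, lt_of_le_of_ne ht0 ?_, by rwa [hu] at htlt⟩
    rintro rfl
    simp at htlt
  choose t ht0 htlt using hchoice
  set V : S → Set U := fun u => {v | ‖f v + t u • g v‖ < ‖f‖} with hV
  have hVopen : ∀ u : S, IsOpen (V u) := fun u =>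
    isOpen_lt ((f.continuous.add ((g.continuous).const_smul _)).norm) continuous_const
  have hcover : S ⊆ ⋃ u : S, V u := fun u hu =>
    mem_iUnion.2 ⟨⟨u, hu⟩, htlt ⟨u, hu⟩⟩
  obtain ⟨F, hF⟩ := hScompact.elim_finite_subcover V hVopen hcover
  have hFne : F.Nonempty := by
    obtain ⟨i, hi, -⟩ := mem_iUnion₂.1 (hF hu₀)
    exact ⟨i, hi⟩
  set τ : ℝ := F.inf' hFne t with hτ
  have hτpos : 0 < τ := (Finset.lt_inf'_iff hFne).2 fun b _ => ht0 b
  set W : Set U := ⋃ i ∈ F, V i with hW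
  have hWopen : IsOpen W := isOpen_biUnion fun i _ => hVopen i
  set K : Set U := univ \ W with hK
  have hKcompact : IsCompact K := by
    rw [hK, Set.diff_eq]
    exact (isClosed_univ.inter hWopen.isClosed_compl).isCompact
  -- find t' > 0 with t' ≤ τ and bound on K
  have hexists : ∃ t' : ℝ, 0 < t' ∧ t' ≤ τ ∧
      ∀ v ∈ K, ‖f v‖ + t' * ‖g v‖ < ‖f‖ := by
    rcases K.eq_empty_or_nonempty with hKe | hKne
    · exact ⟨τ, hτpos, le_refl _, fun v hv => by rw [hKe] at hv; exact hv.elim⟩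
    · obtain ⟨v₀, hv₀K, hv₀max⟩ := hKcompact.exists_isMaxOn hKne
        (f.continuous.norm.continuousOn)
      set M : ℝ := ‖f v₀‖ with hM
      have hMlt : M < ‖f‖ := by
        have hle : M ≤ ‖f‖ := f.norm_coe_le_norm v₀
        rcases lt_or_eq_of_le hle with hlt | heq
        · exact hlt
        · exact absurd (hF heq) hv₀K.2
      set t' : ℝ := min τ ((‖f‖ - M) / (‖g‖ + 1)) with ht'
      have hgpos : (0:ℝ) < ‖g‖ + 1 := by positivity
      have ht'pos : 0 < t' := lt_min hτpos (div_pos (by linarith) hgpos)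
      refine ⟨t', ht'pos, min_le_left _ _, fun v hv => ?_⟩
      have h1 : ‖f v‖ ≤ M := hv₀max hv
      have h2 : ‖g v‖ ≤ ‖g‖ := g.norm_coe_le_norm v
      have h3 : t' ≤ (‖f‖ - M) / (‖g‖ + 1) := min_le_right _ _
      have h4 : t' * ‖g v‖ ≤ ((‖f‖ - M) / (‖g‖ + 1)) * ‖g‖ := by
        apply mul_le_mul h3 h2 (norm_nonneg _) (div_nonneg (by linarith) hgpos.le)
      have h5 : ((‖f‖ - M) / (‖g‖ + 1)) * ‖g‖ < ‖f‖ - M := by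
        rw [div_mul_eq_mul_div, div_lt_iff₀ hgpos]
        nlinarith [norm_nonneg g]
      linarith
  obtain ⟨t', ht'pos, ht'τ, hKbound⟩ := hexists
  -- everywhere strict bound
  have hall : ∀ v : U, ‖f v + t' • g v‖ < ‖f‖ := by
    intro v
    by_cases hvW : v ∈ W
    · obtain ⟨i, hiF, hvi⟩ := mem_iUnion₂.1 hvW
      have hti : 0 < t i := ht0 i
      have ht'i : t' ≤ t i := le_trans ht'τ (Finset.inf'_le t hiF)
      have hconv := convex_norm_aux' (f v) (g v) ht'pos.le ht'i hti
      have hr0 : 0 < t' / t i := div_pos ht'pos hti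
      have hr1 : t' / t i ≤ 1 := (div_le_one hti).2 ht'i
      have hfv : ‖f v‖ ≤ ‖f‖ := f.norm_coe_le_norm v
      have hstrict : ‖f v + t i • g v‖ < ‖f‖ := hvi
      nlinarith
    · have hvK : v ∈ K := ⟨mem_univ v, hvW⟩
      calc ‖f v + t' • g v‖ ≤ ‖f v‖ + ‖t' • g v‖ := norm_add_le _ _
        _ = ‖f v‖ + t' * ‖g v‖ := by rw [norm_smul, Real.norm_of_nonneg ht'pos.le]
        _ < ‖f‖ := hKbound v hvK
  -- contradiction
  obtain ⟨u', hu', -⟩ := exists_norm_attain' (f + t' • g)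
  have : ‖f + t' • g‖ < ‖f‖ := by
    rw [← hu']
    simpa using hall u'
  exact absurd (h t' ht'pos.le) (not_le.2 this)

/-- **Theorem 2.1 (realcontinuity).** For a compact topological space `U` and a real
normed linear space `X`, and non-zero `f g ∈ C(U, X)`, `f ⊥_B g` iff there exist
`u₁ u₂ ∈ M_f` with `g u₁ ∈ (f u₁)⁺` and `g u₂ ∈ (f u₂)⁻`. -/
theorem birkhoff_orthogonality_continuousMap
    {U : Type*} [TopologicalSpace U] [CompactSpace U]
    {X : Type*} [NormedAddCommGroup X] [NormedSpace ℝ X]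
    (f g : C(U, X)) (hf : f ≠ 0) (hg : g ≠ 0) :
    (∀ t : ℝ, ‖f‖ ≤ ‖f + t • g‖) ↔
      ∃ u₁ u₂ : U, ‖f u₁‖ = ‖f‖ ∧ ‖f u₂‖ = ‖f‖ ∧
        (∀ t : ℝ, 0 ≤ t → ‖f u₁‖ ≤ ‖f u₁ + t • g u₁‖) ∧
        (∀ t : ℝ, t ≤ 0 → ‖f u₂‖ ≤ ‖f u₂ + t • g u₂‖) := by
  constructor
  · intro h
    obtain ⟨u₁, hu₁, hu₁'⟩ := forward_aux' f g hf (fun s _ => h s)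
    obtain ⟨u₂, hu₂, hu₂'⟩ := forward_aux' f (-g) hf (fun s _ => by
      have heq : f + s • (-g) = f + (-s) • g := by
        rw [smul_neg, ← neg_smul]
      rw [heq]; exact h (-s))
    refine ⟨u₁, u₂, hu₁, hu₂, hu₁', fun s hs => ?_⟩
    have := hu₂' (-s) (by linarith)
    simpa [neg_smul, smul_neg] using this
  · rintro ⟨u₁, u₂, hu₁, hu₂, hp, hm⟩ s
    rcases le_or_gt 0 s with hs | hs
    · calc ‖f‖ = ‖f u₁‖ := hu₁.symm
        _ ≤ ‖f u₁ + s • g u₁‖ := hp s hs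
        _ = ‖(f + s • g) u₁‖ := by simp
        _ ≤ ‖f + s • g‖ := (f + s • g).norm_coe_le_norm u₁
    · calc ‖f‖ = ‖f u₂‖ := hu₂.symm
        _ ≤ ‖f u₂ + s • g u₂‖ := hm s hs.le
        _ = ‖(f + s • g) u₂‖ := by simp
        _ ≤ ‖f + s • g‖ := (f + s • g).norm_coe_le_norm u₂
end

section
/- Let U be a compact topological space and X a real normed linear space. Let f ∈ C(U, X) be non-zero with M_f connected. Then for any g ∈ C(U, X), f ⊥_B g (i.e., ‖f + λg‖_U ≥ ‖f‖_U for all real λ) if and only if there exists u₀ ∈ M_f such that f(u₀) ⊥_B g(u₀). -/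
/-!
Split Birkhoff–James orthogonality `x ⊥_B y` into orthogonality to the two rays `ℝ≥0 • y` and
`ℝ≥0 • (-y)`. By convexity of `t ↦ ‖x + t • y‖`, every `x` is orthogonal to at least one of the
two rays. If `f` is orthogonal to the ray of `g` in `C(U, X)`, some point of `M_f` is orthogonal
to the ray of `g` pointwise: otherwise every point, inside `M_f` or not, has a small `t > 0` with
`‖f u + t • g u‖ < ‖f‖`, the open sets where this holds increase as `t` decreases, and compactness
gives one `t` that works everywhere. So `M_f` is covered by the two closed sets of points
orthogonal to the ray of `g` resp. `-g`, each meeting `M_f`; by connectedness they meet inside `M_f`.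
-/

open Filter Topology

section RayOrthogonal

variable {X : Type*} [NormedAddCommGroup X] [NormedSpace ℝ X]

/-- Birkhoff–James orthogonality of `x` to the ray `ℝ≥0 • y`. -/
def IsRayOrthogonal (x y : X) : Prop :=
  ∀ t : ℝ, 0 ≤ t → ‖x‖ ≤ ‖x + t • y‖

theorem forall_norm_le_norm_add_smul_iff {x y : X} :
    (∀ t : ℝ, ‖x‖ ≤ ‖x + t • y‖) ↔ IsRayOrthogonal x y ∧ IsRayOrthogonal x (-y) := by
  refine ⟨fun h => ⟨fun t _ => h t, fun t _ => by simpa using h (-t)⟩, fun ⟨hpos, hneg⟩ t => ?_⟩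
  rcases le_total 0 t with ht | ht
  · exact hpos t ht
  · simpa using hneg (-t) (neg_nonneg.mpr ht)

theorem not_isRayOrthogonal_iff {x y : X} :
    ¬ IsRayOrthogonal x y ↔ ∃ t > (0 : ℝ), ‖x + t • y‖ < ‖x‖ := by
  simp only [IsRayOrthogonal, not_forall, not_le, exists_prop]
  refine ⟨fun ⟨t, ht, hlt⟩ => ⟨t, ht.lt_of_ne ?_, hlt⟩, fun ⟨t, ht, hlt⟩ => ⟨t, ht.le, hlt⟩⟩
  rintro rfl
  simp at hlt

theorem norm_smul_add_smul_le {a b : ℝ} (ha : 0 ≤ a) (hb : 0 ≤ b) (x y : X) :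
    ‖a • x + b • y‖ ≤ a * ‖x‖ + b * ‖y‖ :=
  (norm_add_le _ _).trans_eq (by rw [norm_smul_of_nonneg ha, norm_smul_of_nonneg hb])

theorem isRayOrthogonal_or_isRayOrthogonal_neg (x y : X) :
    IsRayOrthogonal x y ∨ IsRayOrthogonal x (-y) := by
  refine or_iff_not_imp_left.mpr fun h t ht => ?_
  obtain ⟨s, hs, hlt⟩ := not_isRayOrthogonal_iff.mp h
  have hx : (s + t) • x = s • (x + t • -y) + t • (x + s • y) := by module
  have : (s + t) * ‖x‖ ≤ s * ‖x + t • -y‖ + t * ‖x + s • y‖ := by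
    rw [← norm_smul_of_nonneg (by positivity), hx]
    exact norm_smul_add_smul_le hs.le ht _ _
  nlinarith [mul_le_mul_of_nonneg_left hlt.le ht]

theorem norm_add_smul_lt_of_le {x y : X} {c s t : ℝ} (hx : ‖x‖ ≤ c) (hs : ‖x + s • y‖ < c)
    (ht : 0 < t) (hts : t ≤ s) : ‖x + t • y‖ < c := by
  have hxy : s • (x + t • y) = (s - t) • x + t • (x + s • y) := by module
  have : s * ‖x + t • y‖ ≤ (s - t) * ‖x‖ + t * ‖x + s • y‖ := by
    rw [← norm_smul_of_nonneg (by linarith), hxy]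
    exact norm_smul_add_smul_le (by linarith) ht.le _ _
  nlinarith [mul_le_mul_of_nonneg_left hx (sub_nonneg.mpr hts)]

theorem exists_pos_norm_add_smul_lt {x : X} (y : X) {c : ℝ} (hx : ‖x‖ < c) :
    ∃ t > (0 : ℝ), ‖x + t • y‖ < c := by
  have hcont : Continuous fun t : ℝ => ‖x + t • y‖ := by fun_prop
  have : ∀ᶠ t in 𝓝[>] (0 : ℝ), ‖x + t • y‖ < c :=
    nhdsWithin_le_nhds (hcont.tendsto' 0 _ (by simp) |>.eventually (gt_mem_nhds hx))
  exact (this.and self_mem_nhdsWithin).exists.imp fun t ⟨hlt, ht⟩ => ⟨ht, hlt⟩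

end RayOrthogonal

namespace ContinuousMap

variable {U : Type*} [TopologicalSpace U] {X : Type*} [NormedAddCommGroup X] [NormedSpace ℝ X]

theorem isClosed_setOf_isRayOrthogonal (f g : C(U, X)) :
    IsClosed {u | IsRayOrthogonal (f u) (g u)} := by
  simp only [IsRayOrthogonal, Set.ofPred_forall]
  exact isClosed_iInter fun t => isClosed_iInter fun _ => isClosed_le (by fun_prop) (by fun_prop)

variable [CompactSpace U]

theorem isRayOrthogonal_of_norm_eq {f g : C(U, X)} {u : U} (hu : ‖f u‖ = ‖f‖)
    (h : IsRayOrthogonal (f u) (g u)) : IsRayOrthogonal f g := fun t ht =>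
  calc ‖f‖ = ‖f u‖ := hu.symm
    _ ≤ ‖f u + t • g u‖ := h t ht
    _ ≤ ‖f + t • g‖ := (f + t • g).norm_coe_le_norm u

variable [Nonempty U]

theorem exists_pos_norm_add_smul_lt_of_forall {f g : C(U, X)} {c : ℝ} (hf : ∀ u, ‖f u‖ ≤ c)
    (h : ∀ u, ∃ t > (0 : ℝ), ‖f u + t • g u‖ < c) : ∃ t > (0 : ℝ), ‖f + t • g‖ < c := by
  let O : ℕ → Set U := fun n => {u | ‖f u + (1 / ((n : ℝ) + 1)) • g u‖ < c}
  have hO : ∀ n, IsOpen (O n) := fun n => isOpen_lt (by fun_prop) continuous_const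
  have hcover : Set.univ ⊆ ⋃ n, O n := fun u _ => by
    obtain ⟨t, ht, hlt⟩ := h u
    obtain ⟨n, hn⟩ := exists_nat_one_div_lt ht
    exact Set.mem_iUnion.mpr ⟨n, norm_add_smul_lt_of_le (hf u) hlt (by positivity) hn.le⟩
  have hmono : Monotone O := fun m n hmn u (hu : _ < c) =>
    norm_add_smul_lt_of_le (hf u) hu (by positivity) (by gcongr)
  obtain ⟨n, hn⟩ := isCompact_univ.elim_directed_cover O hO hcover hmono.directed_le
  exact ⟨1 / ((n : ℝ) + 1), by positivity, (norm_lt_iff_of_nonempty _).mpr fun u => hn trivial⟩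

theorem exists_norm_eq_isRayOrthogonal {f g : C(U, X)} (h : IsRayOrthogonal f g) :
    ∃ u, ‖f u‖ = ‖f‖ ∧ IsRayOrthogonal (f u) (g u) := by
  by_contra! hM
  have hdecrease : ∀ u, ∃ t > (0 : ℝ), ‖f u + t • g u‖ < ‖f‖ := fun u => by
    rcases (f.norm_coe_le_norm u).lt_or_eq with hlt | heq
    · exact exists_pos_norm_add_smul_lt _ hlt
    · exact heq ▸ not_isRayOrthogonal_iff.mp (hM u heq)
  obtain ⟨t, ht, hlt⟩ := exists_pos_norm_add_smul_lt_of_forall f.norm_coe_le_norm hdecrease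
  exact (h t ht.le).not_gt hlt

end ContinuousMap

open ContinuousMap in
theorem birkhoff_orthogonality_continuousMap_of_connected_general
    {U : Type*} [TopologicalSpace U] [CompactSpace U]
    {X : Type*} [NormedAddCommGroup X] [NormedSpace ℝ X]
    (f : C(U, X))
    (hconn : IsConnected {u : U | ‖f u‖ = ‖f‖})
    (g : C(U, X)) :
    (∀ t : ℝ, ‖f‖ ≤ ‖f + t • g‖) ↔
      ∃ u₀ : U, ‖f u₀‖ = ‖f‖ ∧ ∀ t : ℝ, ‖f u₀‖ ≤ ‖f u₀ + t • g u₀‖ := by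
  have : Nonempty U := ⟨hconn.nonempty.some⟩
  simp only [forall_norm_le_norm_add_smul_iff]
  constructor
  · rintro ⟨hpos, hneg⟩
    obtain ⟨u, huM, hu⟩ := exists_norm_eq_isRayOrthogonal hpos
    obtain ⟨v, hvM, hv⟩ := exists_norm_eq_isRayOrthogonal hneg
    exact isPreconnected_closed_iff.mp hconn.isPreconnected _ _
      (isClosed_setOf_isRayOrthogonal f g) (isClosed_setOf_isRayOrthogonal f (-g))
      (fun u _ => isRayOrthogonal_or_isRayOrthogonal_neg (f u) (g u)) ⟨u, huM, hu⟩ ⟨v, hvM, hv⟩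
  · rintro ⟨u, hu, hpos, hneg⟩
    exact ⟨isRayOrthogonal_of_norm_eq hu hpos, isRayOrthogonal_of_norm_eq (g := -g) hu hneg⟩

/-- **Theorem 2.2 (connectedcontinuity).** For a compact topological space `U`, a real
normed linear space `X`, and a non-zero `f ∈ C(U, X)` whose norm attainment set `M_f`
is connected: for any `g ∈ C(U, X)`, `f ⊥_B g` iff there exists `u₀ ∈ M_f` with
`f u₀ ⊥_B g u₀`. -/
theorem birkhoff_orthogonality_continuousMap_of_connected
    {U : Type*} [TopologicalSpace U] [CompactSpace U]
    {X : Type*} [NormedAddCommGroup X] [NormedSpace ℝ X]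
    (f : C(U, X)) (hf : f ≠ 0)
    (hconn : IsConnected {u : U | ‖f u‖ = ‖f‖})
    (g : C(U, X)) :
    (∀ t : ℝ, ‖f‖ ≤ ‖f + t • g‖) ↔
      ∃ u₀ : U, ‖f u₀‖ = ‖f‖ ∧ ∀ t : ℝ, ‖f u₀‖ ≤ ‖f u₀ + t • g u₀‖ :=
  birkhoff_orthogonality_continuousMap_of_connected_general f hconn g
end

section
/- Let U be a compact topological space and X a real normed linear space. Let f, g ∈ C(U, X) be non-zero, and let D_f ⊆ M_f be a connected subset. Then the following are equivalent: (i) there exist u₁, u₂ ∈ D_f such that g(u₁) ∈ f(u₁)⁺ and g(u₂) ∈ f(u₂)⁻; (ii) there exists u₀ ∈ D_f such that f(u₀) ⊥_B g(u₀). -/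
/-- **Theorem 2.4 (componentcontinuity).** For a compact topological space `U`, a real
normed linear space `X`, non-zero `f g ∈ C(U, X)`, and a connected subset
`D_f ⊆ M_f`, the following are equivalent:
(i) there exist `u₁ u₂ ∈ D_f` with `g u₁ ∈ (f u₁)⁺` and `g u₂ ∈ (f u₂)⁻`;
(ii) there exists `u₀ ∈ D_f` with `f u₀ ⊥_B g u₀`. -/
theorem birkhoff_orthogonality_continuousMap_connected_subset
    {U : Type*} [TopologicalSpace U] [CompactSpace U]
    {X : Type*} [NormedAddCommGroup X] [NormedSpace ℝ X]
    (f g : C(U, X)) (hf : f ≠ 0) (hg : g ≠ 0)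
    (D : Set U) (hDsub : D ⊆ {u : U | ‖f u‖ = ‖f‖}) (hDconn : IsConnected D) :
    (∃ u₁ ∈ D, ∃ u₂ ∈ D,
        (∀ t : ℝ, 0 ≤ t → ‖f u₁‖ ≤ ‖f u₁ + t • g u₁‖) ∧
        (∀ t : ℝ, t ≤ 0 → ‖f u₂‖ ≤ ‖f u₂ + t • g u₂‖)) ↔
      ∃ u₀ ∈ D, ∀ t : ℝ, ‖f u₀‖ ≤ ‖f u₀ + t • g u₀‖ := by
  constructor
  · rintro ⟨u₁, hu₁, u₂, hu₂, h1, h2⟩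
    set A : Set U := {u | ∀ t : ℝ, 0 ≤ t → ‖f u‖ ≤ ‖f u + t • g u‖} with hA
    set B : Set U := {u | ∀ t : ℝ, t ≤ 0 → ‖f u‖ ≤ ‖f u + t • g u‖} with hB
    have hclosed : ∀ t : ℝ, IsClosed {u : U | ‖f u‖ ≤ ‖f u + t • g u‖} := by
      intro t
      exact isClosed_le f.continuous.norm
        ((f.continuous.add (g.continuous.const_smul t)).norm)
    have hAclosed : IsClosed A := by
      have : A = ⋂ t : {t : ℝ // 0 ≤ t}, {u : U | ‖f u‖ ≤ ‖f u + (t : ℝ) • g u‖} := by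
        ext u
        simp only [hA, Set.mem_setOf_eq, Set.mem_iInter, Subtype.forall]
      rw [this]
      exact isClosed_iInter fun t => hclosed t
    have hBclosed : IsClosed B := by
      have : B = ⋂ t : {t : ℝ // t ≤ 0}, {u : U | ‖f u‖ ≤ ‖f u + (t : ℝ) • g u‖} := by
        ext u
        simp only [hB, Set.mem_setOf_eq, Set.mem_iInter, Subtype.forall]
      rw [this]
      exact isClosed_iInter fun t => hclosed t
    have hcover : D ⊆ A ∪ B := by
      intro u _
      by_contra hcon
      simp only [Set.mem_union, hA, hB, Set.mem_setOf_eq, not_or, not_forall, not_le] at hcon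
      obtain ⟨⟨t₁, ht₁, hlt₁⟩, ⟨t₂, ht₂, hlt₂⟩⟩ := hcon
      have ht₁pos : 0 < t₁ := by
        rcases ht₁.lt_or_eq with h | h
        · exact h
        · exfalso; rw [← h, zero_smul, add_zero] at hlt₁; exact lt_irrefl _ hlt₁
      have ht₂neg : t₂ < 0 := by
        rcases ht₂.lt_or_eq with h | h
        · exact h
        · exfalso; rw [h, zero_smul, add_zero] at hlt₂; exact lt_irrefl _ hlt₂
      have hd : (0:ℝ) < t₁ - t₂ := by linarith
      set a : ℝ := t₁ / (t₁ - t₂) with ha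
      set b : ℝ := -t₂ / (t₁ - t₂) with hb
      have hapos : 0 < a := div_pos ht₁pos hd
      have hbpos : 0 < b := div_pos (by linarith) hd
      have hab : a + b = 1 := by
        rw [ha, hb]; field_simp; ring
      have key : f u = a • (f u + t₂ • g u) + b • (f u + t₁ • g u) := by
        rw [ha, hb]
        match_scalars <;> field_simp <;> ring
      have hineq : ‖f u‖ < ‖f u‖ := by
        calc ‖f u‖ = ‖a • (f u + t₂ • g u) + b • (f u + t₁ • g u)‖ := by rw [← key]
          _ ≤ ‖a • (f u + t₂ • g u)‖ + ‖b • (f u + t₁ • g u)‖ := norm_add_le _ _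
          _ = a * ‖f u + t₂ • g u‖ + b * ‖f u + t₁ • g u‖ := by
              rw [norm_smul, norm_smul, Real.norm_eq_abs, Real.norm_eq_abs,
                abs_of_pos hapos, abs_of_pos hbpos]
          _ < a * ‖f u‖ + b * ‖f u‖ := by
              exact add_lt_add (by exact mul_lt_mul_of_pos_left hlt₂ hapos)
                (mul_lt_mul_of_pos_left hlt₁ hbpos)
          _ = ‖f u‖ := by rw [← add_mul, hab, one_mul]
      exact lt_irrefl _ hineq
    have hres := (isPreconnected_closed_iff.mp hDconn.isPreconnected) A B hAclosed hBclosed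
      hcover ⟨u₁, hu₁, h1⟩ ⟨u₂, hu₂, h2⟩
    obtain ⟨u₀, hu₀D, hu₀A, hu₀B⟩ := hres
    refine ⟨u₀, hu₀D, fun t => ?_⟩
    rcases le_total 0 t with ht | ht
    · exact hu₀A t ht
    · exact hu₀B t ht
  · rintro ⟨u₀, hu₀, h⟩
    exact ⟨u₀, hu₀, u₀, hu₀, fun t _ => h t, fun t _ => h t⟩
end

section
/- Let X be a finite-dimensional real Banach space and let T be a bounded linear operator on X whose norm attainment set satisfies M_T = D ∪ (−D), where D is a connected subset of the unit sphere of X. Then for any bounded linear operator A on X with T ⊥_B A (i.e., ‖T + λA‖ ≥ ‖T‖ in the operator norm for all real λ), there exists x ∈ D such that Tx ⊥_B Ax. -/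
/-!
Split `T ⊥_B A` into the one-sided conditions `A ∈ T⁺` and `-A ∈ T⁺`. By compactness of the
unit sphere, `A ∈ T⁺` forces some `x ∈ M_T` with `A x ∈ (T x)⁺`: otherwise a single small `t > 0`
gives `‖T x + t • A x‖ < ‖T‖` on the whole sphere, i.e. `‖T + t • A‖ < ‖T‖`. Since
`M_T = D ∪ (-D)` and `(·)⁺` is invariant under `(u, v) ↦ (-u, -v)`, such an `x` can be taken
in `D`. Now if no `x ∈ D` had `T x ⊥_B A x`, then `D` would be covered by the open sets
`{x | A x ∉ (T x)⁺}` and `{x | -A x ∉ (T x)⁺}`, which are disjoint because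
`t ↦ ‖T x + t • A x‖` is convex. Connectedness puts `D` inside one of them, contradicting the
previous step for `A` or for `-A`.
-/

open Metric Set Topology

section BirkhoffJames

variable {E : Type*} [NormedAddCommGroup E] [NormedSpace ℝ E]

def BirkhoffJamesOrthogonal (u v : E) : Prop := ∀ t : ℝ, ‖u‖ ≤ ‖u + t • v‖

/-- `v ∈ u⁺` in Sain's notation. -/
def BirkhoffJamesPlus (u v : E) : Prop := ∀ t : ℝ, 0 < t → ‖u‖ ≤ ‖u + t • v‖

theorem convexOn_norm_add_smul (u v : E) : ConvexOn ℝ univ fun t : ℝ ↦ ‖u + t • v‖ := by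
  refine ⟨convex_univ, fun s _ t _ a b ha hb hab ↦ ?_⟩
  calc ‖u + (a • s + b • t) • v‖ = ‖a • (u + s • v) + b • (u + t • v)‖ := by
        congr 1
        rw [smul_add, smul_add, add_add_add_comm, Convex.combo_self hab, add_smul, smul_smul,
          smul_smul, smul_eq_mul, smul_eq_mul]
    _ ≤ a * ‖u + s • v‖ + b * ‖u + t • v‖ := by
        refine (norm_add_le _ _).trans_eq ?_
        rw [norm_smul_of_nonneg ha, norm_smul_of_nonneg hb]

theorem norm_add_smul_lt_of_le_of_lt {u v : E} {c s t : ℝ} (hu : ‖u‖ ≤ c)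
    (ht : ‖u + t • v‖ < c) (hs : 0 < s) (hst : s ≤ t) : ‖u + s • v‖ < c := by
  have htpos : 0 < t := hs.trans_le hst
  have hl : 0 < s / t := div_pos hs htpos
  have hl' : 0 ≤ 1 - s / t := sub_nonneg.2 ((div_le_one htpos).2 hst)
  have hconv := (convexOn_norm_add_smul u v).2 (mem_univ 0) (mem_univ t) hl' hl.le
    (sub_add_cancel 1 (s / t))
  simp only [smul_eq_mul, mul_zero, zero_add, div_mul_cancel₀ s htpos.ne', zero_smul,
    add_zero] at hconv
  refine hconv.trans_lt ?_
  calc (1 - s / t) * ‖u‖ + s / t * ‖u + t • v‖ < (1 - s / t) * c + s / t * c :=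
        add_lt_add_of_le_of_lt (mul_le_mul_of_nonneg_left hu hl') (mul_lt_mul_of_pos_left ht hl)
    _ = c := by ring

theorem birkhoffJamesOrthogonal_iff_plus_and_plus_neg {u v : E} :
    BirkhoffJamesOrthogonal u v ↔ BirkhoffJamesPlus u v ∧ BirkhoffJamesPlus u (-v) := by
  refine ⟨fun h ↦ ⟨fun t _ ↦ h t, fun t _ ↦ by simpa using h (-t)⟩, fun ⟨hplus, hminus⟩ t ↦ ?_⟩
  rcases lt_trichotomy t 0 with ht | rfl | ht
  · simpa using hminus (-t) (neg_pos.2 ht)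
  · simp
  · exact hplus t ht

theorem birkhoffJamesPlus_or_birkhoffJamesPlus_neg (u v : E) :
    BirkhoffJamesPlus u v ∨ BirkhoffJamesPlus u (-v) := by
  by_contra! h
  simp only [BirkhoffJamesPlus, not_forall, not_le, exists_prop] at h
  obtain ⟨⟨s, hs, hsu⟩, ⟨t, ht, htu⟩⟩ := h
  rw [smul_neg, ← neg_smul] at htu
  have := (convexOn_norm_add_smul u v).lt_left_of_right_lt (mem_univ (-t)) (mem_univ s)
    (Ioo_subset_openSegment ⟨neg_neg_of_pos ht, hs⟩) (by simpa using hsu)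
  simp only [zero_smul, add_zero] at this
  exact this.not_gt htu

theorem BirkhoffJamesPlus.neg {u v : E} (h : BirkhoffJamesPlus u v) :
    BirkhoffJamesPlus (-u) (-v) := fun t ht ↦ by
  simpa only [norm_neg, smul_neg, ← neg_add] using h t ht

theorem isOpen_setOf_not_birkhoffJamesPlus {X : Type*} [TopologicalSpace X] {u v : X → E}
    (hu : Continuous u) (hv : Continuous v) : IsOpen {x | ¬BirkhoffJamesPlus (u x) (v x)} := by
  simp only [BirkhoffJamesPlus, not_forall, not_le, exists_prop, ofPred_exists]
  exact isOpen_iUnion fun t ↦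
    isOpen_const.inter (isOpen_lt (by fun_prop : Continuous fun x ↦ ‖u x + t • v x‖) (by fun_prop))

theorem exists_pos_norm_add_smul_lt_s4 {u : E} (v : E) {c : ℝ} (hu : ‖u‖ < c) :
    ∃ t : ℝ, 0 < t ∧ ‖u + t • v‖ < c := by
  have hcont : Continuous fun t : ℝ ↦ ‖u + t • v‖ := by fun_prop
  have hev : ∀ᶠ t in 𝓝[>] (0 : ℝ), ‖u + t • v‖ < c :=
    nhdsWithin_le_nhds (hcont.tendsto' 0 ‖u‖ (by simp) (Iio_mem_nhds hu))
  obtain ⟨t, ht, htpos⟩ := (hev.and self_mem_nhdsWithin).exists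
  exact ⟨t, htpos, ht⟩

theorem IsCompact.exists_pos_forall_norm_add_smul_lt {X : Type*} [TopologicalSpace X]
    {K : Set X} (hK : IsCompact K) {u v : X → E} (hu : Continuous u) (hv : Continuous v) {c : ℝ}
    (hle : ∀ x ∈ K, ‖u x‖ ≤ c) (h : ∀ x ∈ K, ∃ t : ℝ, 0 < t ∧ ‖u x + t • v x‖ < c) :
    ∃ t : ℝ, 0 < t ∧ ∀ x ∈ K, ‖u x + t • v x‖ < c := by
  have : CompactSpace K := isCompact_iff_compactSpace.1 hK
  let V : Ioi (0 : ℝ) → Set K := fun t ↦ {x | ‖u x + (t : ℝ) • v x‖ < c}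
  have hV : Antitone V := fun s t hst x hx ↦
    norm_add_smul_lt_of_le_of_lt (hle x x.2) hx s.2 hst
  obtain ⟨t, ht⟩ := isCompact_univ.elim_directed_cover V
    (fun t ↦ isOpen_lt (by fun_prop) continuous_const)
    (fun x _ ↦ let ⟨t, ht, hlt⟩ := h x x.2; mem_iUnion.2 ⟨⟨t, ht⟩, hlt⟩) hV.directed_le
  exact ⟨t, t.2, fun x hx ↦ ht (mem_univ ⟨x, hx⟩)⟩

end BirkhoffJames

namespace ContinuousLinearMap

variable {X Y : Type*} [NormedAddCommGroup X] [NormedSpace ℝ X] [NormedAddCommGroup Y]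
  [NormedSpace ℝ Y]

def normAttainSet (T : X →L[ℝ] Y) : Set X := {x | ‖x‖ = 1 ∧ ‖T x‖ = ‖T‖}

variable [FiniteDimensional ℝ X]

theorem normAttainSet_nonempty [Nontrivial X] (T : X →L[ℝ] Y) : T.normAttainSet.Nonempty := by
  obtain ⟨x, hx, hmax⟩ := (isCompact_sphere (0 : X) 1).exists_isMaxOn
    (NormedSpace.sphere_nonempty.2 zero_le_one) T.continuous.norm.continuousOn
  have hx : ‖x‖ = 1 := by simpa using hx
  refine ⟨x, hx, le_antisymm (T.unit_le_opNorm x hx.le) ?_⟩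
  exact T.opNorm_le_of_unit_norm (norm_nonneg _) fun y hy ↦ hmax (by simpa using hy)

theorem exists_mem_normAttainSet_birkhoffJamesPlus [Nontrivial X] {T A : X →L[ℝ] Y}
    (hTA : BirkhoffJamesPlus T A) : ∃ x ∈ T.normAttainSet, BirkhoffJamesPlus (T x) (A x) := by
  by_contra! h
  have hdescent : ∀ x ∈ sphere (0 : X) 1, ∃ t : ℝ, 0 < t ∧ ‖T x + t • A x‖ < ‖T‖ := by
    intro x hx
    rw [mem_sphere_zero_iff_norm] at hx
    rcases (T.unit_le_opNorm x hx.le).lt_or_eq with hlt | heq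
    · exact exists_pos_norm_add_smul_lt_s4 (A x) hlt
    · simpa [BirkhoffJamesPlus, ← heq] using h x ⟨hx, heq⟩
  obtain ⟨t, ht, hunif⟩ := (isCompact_sphere (0 : X) 1).exists_pos_forall_norm_add_smul_lt
    T.continuous A.continuous (fun x hx ↦ T.unit_le_opNorm x (mem_sphere_zero_iff_norm.1 hx).le)
    hdescent
  obtain ⟨z, hz, hTz⟩ := (T + t • A).normAttainSet_nonempty
  have hlt : ‖T + t • A‖ < ‖T‖ := by
    simpa only [← hTz, add_apply, smul_apply] using hunif z (mem_sphere_zero_iff_norm.2 hz)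
  exact (hTA t ht).not_gt hlt

theorem exists_mem_birkhoffJamesPlus_of_normAttainSet_eq {T A : X →L[ℝ] Y} {D : Set X}
    (hD : D.Nonempty) (hM : T.normAttainSet = D ∪ -D) (hTA : BirkhoffJamesPlus T A) :
    ∃ x ∈ D, BirkhoffJamesPlus (T x) (A x) := by
  obtain ⟨x₀, hx₀⟩ := hD
  have hx₀M : x₀ ∈ T.normAttainSet := hM ▸ Or.inl hx₀
  have : Nontrivial X := nontrivial_of_ne x₀ 0 (norm_ne_zero_iff.1 (hx₀M.1 ▸ one_ne_zero))
  obtain ⟨x, hxM, hx⟩ := exists_mem_normAttainSet_birkhoffJamesPlus hTA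
  rcases hM ▸ hxM with hxD | hxD
  · exact ⟨x, hxD, hx⟩
  · exact ⟨-x, hxD, by simpa only [map_neg] using hx.neg⟩

end ContinuousLinearMap

open ContinuousLinearMap

theorem birkhoff_orthogonality_operators_of_connected_attainment_general
    {X : Type*} [NormedAddCommGroup X] [NormedSpace ℝ X]
    [FiniteDimensional ℝ X]
    (T : X →L[ℝ] X) (D : Set X)
    (hDconn : IsConnected D)
    (hM : {x : X | ‖x‖ = 1 ∧ ‖T x‖ = ‖T‖} = D ∪ (-D))
    (A : X →L[ℝ] X) (hTA : ∀ t : ℝ, ‖T‖ ≤ ‖T + t • A‖) :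
    ∃ x ∈ D, ∀ t : ℝ, ‖T x‖ ≤ ‖T x + t • A x‖ := by
  have hM' : T.normAttainSet = D ∪ -D := hM
  have hplus := birkhoffJamesOrthogonal_iff_plus_and_plus_neg.1 hTA
  suffices ∃ x ∈ D, BirkhoffJamesOrthogonal (T x) (A x) from this
  by_contra! h
  have hcover :
      D ⊆ {x | ¬BirkhoffJamesPlus (T x) (A x)} ∪ {x | ¬BirkhoffJamesPlus (T x) (-A x)} :=
    fun x hx ↦ by
      simpa only [mem_union, mem_ofPred_eq, birkhoffJamesOrthogonal_iff_plus_and_plus_neg,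
        not_and_or] using h x hx
  have hdisj : Disjoint {x | ¬BirkhoffJamesPlus (T x) (A x)}
      {x | ¬BirkhoffJamesPlus (T x) (-A x)} :=
    disjoint_left.2 fun x h₁ h₂ ↦ (birkhoffJamesPlus_or_birkhoffJamesPlus_neg _ _).elim h₁ h₂
  rcases hDconn.isPreconnected.subset_or_subset
      (isOpen_setOf_not_birkhoffJamesPlus T.continuous A.continuous)
      (isOpen_setOf_not_birkhoffJamesPlus T.continuous A.continuous.neg) hdisj hcover with
    hsub | hsub
  · obtain ⟨x, hxD, hx⟩ :=
      exists_mem_birkhoffJamesPlus_of_normAttainSet_eq hDconn.nonempty hM' hplus.1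
    exact hsub hxD hx
  · obtain ⟨x, hxD, hx⟩ :=
      exists_mem_birkhoffJamesPlus_of_normAttainSet_eq hDconn.nonempty hM' hplus.2
    exact hsub hxD hx

/-- **Corollary 2.6 (Sain–Paul, Theorem 2.1 of [SP]).** Let `T` be a bounded linear
operator on a finite-dimensional real Banach space `X` attaining its norm exactly on
`D ∪ (-D)` where `D` is a connected subset of the unit sphere. Then for any bounded
linear operator `A` with `T ⊥_B A`, there exists `x ∈ D` with `T x ⊥_B A x`. -/
theorem birkhoff_orthogonality_operators_of_connected_attainment
    {X : Type*} [NormedAddCommGroup X] [NormedSpace ℝ X]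
    [CompleteSpace X] [FiniteDimensional ℝ X]
    (T : X →L[ℝ] X) (D : Set X)
    (hDsphere : D ⊆ Metric.sphere (0 : X) 1) (hDconn : IsConnected D)
    (hM : {x : X | ‖x‖ = 1 ∧ ‖T x‖ = ‖T‖} = D ∪ (-D))
    (A : X →L[ℝ] X) (hTA : ∀ t : ℝ, ‖T‖ ≤ ‖T + t • A‖) :
    ∃ x ∈ D, ∀ t : ℝ, ‖T x‖ ≤ ‖T x + t • A x‖ :=
  birkhoff_orthogonality_operators_of_connected_attainment_general T D hDconn hM A hTA
end

section
/- Let H₁ and H₂ be finite-dimensional real Hilbert spaces and let A, B : H₂ → H₁ be non-zero linear maps. Then the bilinear form T_A is Birkhoff–James orthogonal to T_B, i.e., ‖T_{A+λB}‖ ≥ ‖T_A‖ for all real λ (where ‖T_C‖ = sup over unit vectors x, y of |⟨x, Cy⟩|), if and only if there exists a pair of unit vectors (x₀, y₀) with |⟨x₀, Ay₀⟩| = ‖T_A‖ such that ⟨x₀, By₀⟩ = 0. -/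
/-- The norm of the bilinear form induced by `C : H₂ →L[ℝ] H₁`, i.e. the supremum of
`|⟪x, C y⟫|` over unit vectors `x ∈ H₁`, `y ∈ H₂`. -/
noncomputable def bilinearFormNorm
    {H₁ : Type*} [NormedAddCommGroup H₁] [InnerProductSpace ℝ H₁]
    {H₂ : Type*} [NormedAddCommGroup H₂] [InnerProductSpace ℝ H₂]
    (C : H₂ →L[ℝ] H₁) : ℝ :=
  sSup {r : ℝ | ∃ x : H₁, ∃ y : H₂, ‖x‖ = 1 ∧ ‖y‖ = 1 ∧ r = |(inner ℝ x (C y) : ℝ)|}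

/-!
Both sides only involve the operator norm, since `‖T_C‖ = ‖C‖`. If `‖A‖ ≤ ‖A + t • B‖` for all
`t > 0`, a unit vector `u` at which `A + t • B` attains its norm satisfies
`‖A u‖ ≥ ‖A‖ - t ‖B‖` and `⟪A u, B u⟫ ≥ -t ‖B‖² / 2`; a limit point as `t → 0⁺` is a unit vector
`y` with `‖A y‖ = ‖A‖` and `⟪A y, B y⟫ ≥ 0`. Replacing `B` by `-B` gives such a `z` with
`⟪A z, B z⟫ ≤ 0`. The vectors on which `A` attains its norm form a subspace (parallelogram law),
so the intermediate value theorem on the segment `[y, z]` yields a norming unit vector `y₀` with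
`⟪A y₀, B y₀⟫ = 0`, and `x₀ = A y₀ / ‖A‖`. Conversely `|⟪x₀, (A + t • B) y₀⟫| = ‖A‖`.
-/

open Set Filter Topology RealInnerProductSpace

section NormedSpace

variable {E F : Type*} [NormedAddCommGroup E] [NormedSpace ℝ E]
  [NormedAddCommGroup F] [NormedSpace ℝ F]

theorem ContinuousLinearMap.exists_norm_eq_one_and_norm_apply_eq [FiniteDimensional ℝ E]
    [Nontrivial E] (f : E →L[ℝ] F) : ∃ y, ‖y‖ = 1 ∧ ‖f y‖ = ‖f‖ := by
  obtain ⟨y, hy, hfy⟩ := ((isCompact_sphere (0 : E) 1).image (by fun_prop)).sSup_mem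
    ((NormedSpace.sphere_nonempty.2 zero_le_one).image fun y => ‖f y‖)
  exact ⟨y, mem_sphere_zero_iff_norm.1 hy, hfy.trans f.sSup_sphere_eq_norm⟩

theorem Submodule.exists_norm_eq_one_and_eq_zero_of_homogeneous (M : Submodule ℝ E)
    {q : E → ℝ} (hq : Continuous q) (hsmul : ∀ (c : ℝ) v, q (c • v) = c ^ 2 * q v)
    {y z : E} (hy : y ∈ M) (hz : z ∈ M) (hy₀ : y ≠ 0) (hz₀ : z ≠ 0)
    (hqy : 0 ≤ q y) (hqz : q z ≤ 0) : ∃ v ∈ M, ‖v‖ = 1 ∧ q v = 0 := by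
  suffices ∃ v ∈ M, v ≠ 0 ∧ q v = 0 by
    obtain ⟨v, hv, hv₀, hqv⟩ := this
    exact ⟨‖v‖⁻¹ • v, M.smul_mem _ hv, norm_smul_inv_norm hv₀, by rw [hsmul, hqv, mul_zero]⟩
  set w : ℝ → E := fun c => (1 - c) • y + c • z
  have hw : ∀ c, w c ∈ M := fun c => M.add_mem (M.smul_mem _ hy) (M.smul_mem _ hz)
  obtain ⟨c, -, hqc⟩ : ∃ c ∈ Icc (0 : ℝ) 1, q (w c) = 0 :=
    intermediate_value_Icc' zero_le_one (hq.comp (by fun_prop)).continuousOn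
      (by simpa [w] using And.intro hqz hqy)
  rcases ne_or_eq (w c) 0 with hwc | hwc
  · exact ⟨w c, hw c, hwc, hqc⟩
  -- `w c = 0` forces `y` and `z` to be proportional, so `q y` and `q z` have the same sign.
  have hc : c ≠ 1 := by rintro rfl; simp [w, hz₀] at hwc
  have hyz : (1 - c) • y = (-c) • z := by rw [neg_smul]; exact eq_neg_of_add_eq_zero_left hwc
  have hq' : (1 - c) ^ 2 * q y = c ^ 2 * q z := by rw [← hsmul, hyz, hsmul, neg_sq]
  have hpos : 0 < (1 - c) ^ 2 := by have : 1 - c ≠ 0 := sub_ne_zero.2 (Ne.symm hc); positivity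
  refine ⟨y, hy, hy₀, le_antisymm ?_ hqy⟩
  nlinarith [sq_nonneg c]

end NormedSpace

section InnerProductSpace

variable {E F : Type*} [NormedAddCommGroup E] [InnerProductSpace ℝ E]
  [NormedAddCommGroup F] [InnerProductSpace ℝ F]

theorem abs_inner_apply_le_opNorm (C : E →L[ℝ] F) {x : F} {y : E} (hx : ‖x‖ = 1)
    (hy : ‖y‖ = 1) : |⟪x, C y⟫| ≤ ‖C‖ :=
  calc |⟪x, C y⟫| ≤ ‖x‖ * ‖C y‖ := abs_real_inner_le_norm x (C y)
    _ ≤ ‖C‖ := by simpa [hx, hy] using C.le_opNorm y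

theorem bilinearFormNorm_eq_opNorm (C : E →L[ℝ] F) : bilinearFormNorm C = ‖C‖ := by
  apply le_antisymm
  · refine Real.sSup_le ?_ (norm_nonneg C)
    rintro r ⟨x, y, hx, hy, rfl⟩
    exact abs_inner_apply_le_opNorm C hx hy
  · have hbdd : BddAbove {r : ℝ | ∃ x : F, ∃ y : E, ‖x‖ = 1 ∧ ‖y‖ = 1 ∧ r = |⟪x, C y⟫|} :=
      ⟨‖C‖, by rintro r ⟨x, y, hx, hy, rfl⟩; exact abs_inner_apply_le_opNorm C hx hy⟩
    have hnonneg : 0 ≤ bilinearFormNorm C :=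
      Real.sSup_nonneg (by rintro r ⟨x, y, -, -, rfl⟩; exact abs_nonneg _)
    refine C.opNorm_le_of_unit_norm hnonneg fun y hy => ?_
    rcases eq_or_ne (C y) 0 with hCy | hCy
    · simpa [hCy] using hnonneg
    refine le_csSup hbdd ⟨‖C y‖⁻¹ • C y, y, norm_smul_inv_norm hCy, hy, ?_⟩
    rw [real_inner_smul_left, real_inner_self_eq_norm_sq, abs_of_nonneg (by positivity)]
    field_simp

theorem ContinuousLinearMap.norm_apply_add_eq_opNorm_mul (f : E →L[ℝ] F) {y z : E}
    (hy : ‖f y‖ = ‖f‖ * ‖y‖) (hz : ‖f z‖ = ‖f‖ * ‖z‖) : ‖f (y + z)‖ = ‖f‖ * ‖y + z‖ := by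
  -- By the parallelogram law, the squared sides of `‖f (y ± z)‖ ≤ ‖f‖ * ‖y ± z‖` have equal sums.
  have hE := parallelogram_law_with_norm ℝ y z
  have hF := parallelogram_law_with_norm ℝ (f y) (f z)
  rw [← map_add, ← map_sub] at hF
  have h₁ := pow_le_pow_left₀ (norm_nonneg _) (f.le_opNorm (y + z)) 2
  have h₂ := pow_le_pow_left₀ (norm_nonneg _) (f.le_opNorm (y - z)) 2
  rw [mul_pow] at h₁ h₂
  rw [hy, hz] at hF
  refine (sq_eq_sq₀ (norm_nonneg _) (by positivity)).1 ?_
  rw [mul_pow]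
  nlinarith

namespace ContinuousLinearMap

def normingSubmodule (f : E →L[ℝ] F) : Submodule ℝ E where
  carrier := {y | ‖f y‖ = ‖f‖ * ‖y‖}
  add_mem' := f.norm_apply_add_eq_opNorm_mul
  zero_mem' := by simp
  smul_mem' c y (hy : ‖f y‖ = ‖f‖ * ‖y‖) := show ‖f (c • y)‖ = ‖f‖ * ‖c • y‖ by
    rw [map_smul, norm_smul, norm_smul, hy, mul_left_comm]

@[simp]
theorem mem_normingSubmodule {f : E →L[ℝ] F} {y : E} :
    y ∈ f.normingSubmodule ↔ ‖f y‖ = ‖f‖ * ‖y‖ :=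
  Iff.rfl

theorem exists_norm_apply_eq_and_inner_nonneg [FiniteDimensional ℝ E] [Nontrivial E]
    (A B : E →L[ℝ] F) (h : ∀ t : ℝ, 0 < t → ‖A‖ ≤ ‖A + t • B‖) :
    ∃ y, ‖y‖ = 1 ∧ ‖A y‖ = ‖A‖ ∧ 0 ≤ ⟪A y, B y⟫ := by
  have approx : ∀ t : ℝ, 0 < t → ∃ u, ‖u‖ = 1 ∧
      ‖A‖ - t * ‖B‖ ≤ ‖A u‖ ∧ -(t * ‖B‖ ^ 2 / 2) ≤ ⟪A u, B u⟫ := by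
    intro t ht
    obtain ⟨u, hu, hnorm⟩ := (A + t • B).exists_norm_eq_one_and_norm_apply_eq
    have hAB : ‖A‖ ≤ ‖A u + t • B u‖ := by simpa using (h t ht).trans_eq hnorm.symm
    have hAu : ‖A u‖ ≤ ‖A‖ := by simpa [hu] using A.le_opNorm u
    have hBu : ‖B u‖ ≤ ‖B‖ := by simpa [hu] using B.le_opNorm u
    refine ⟨u, hu, ?_, ?_⟩
    · have := hAB.trans (norm_add_le _ _)
      rw [norm_smul, Real.norm_of_nonneg ht.le] at this
      nlinarith
    · have hsq := pow_le_pow_left₀ (norm_nonneg _) hAB 2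
      rw [norm_add_sq_real, norm_smul, real_inner_smul_right, Real.norm_of_nonneg ht.le] at hsq
      have hAu₂ := pow_le_pow_left₀ (norm_nonneg _) hAu 2
      have hBu₂ := pow_le_pow_left₀ (by positivity) (mul_le_mul_of_nonneg_left hBu ht.le) 2
      nlinarith
  choose u hu hAu hABu using fun n : ℕ => approx (1 / (n + 1)) Nat.one_div_pos_of_nat
  obtain ⟨y, hy, φ, hφ, hlim⟩ :=
    (isCompact_sphere (0 : E) 1).tendsto_subseq fun n => mem_sphere_zero_iff_norm.2 (hu n)
  rw [mem_sphere_zero_iff_norm] at hy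
  have ht : Tendsto (fun n => 1 / ((φ n : ℝ) + 1)) atTop (𝓝 0) :=
    tendsto_one_div_add_atTop_nhds_zero_nat.comp hφ.tendsto_atTop
  refine ⟨y, hy, le_antisymm (by simpa [hy] using A.le_opNorm y) ?_, ?_⟩
  · refine le_of_tendsto_of_tendsto' ?_ ((A.continuous.norm.tendsto y).comp hlim)
      fun n => hAu (φ n)
    simpa using tendsto_const_nhds.sub (ht.mul_const ‖B‖)
  · refine le_of_tendsto_of_tendsto' ?_
      (((A.continuous.inner B.continuous).tendsto y).comp hlim) fun n => hABu (φ n)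
    simpa using ((ht.mul_const (‖B‖ ^ 2)).div_const 2).neg

theorem exists_norm_apply_eq_and_inner_eq_zero [FiniteDimensional ℝ E] [Nontrivial E]
    (A B : E →L[ℝ] F) (h : ∀ t : ℝ, ‖A‖ ≤ ‖A + t • B‖) :
    ∃ y, ‖y‖ = 1 ∧ ‖A y‖ = ‖A‖ ∧ ⟪A y, B y⟫ = 0 := by
  obtain ⟨y, hy, hAy, hpos⟩ := exists_norm_apply_eq_and_inner_nonneg A B fun t _ => h t
  obtain ⟨z, hz, hAz, hneg⟩ := exists_norm_apply_eq_and_inner_nonneg A (-B) fun t _ => by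
    simpa [neg_smul] using h (-t)
  obtain ⟨v, hv, hv₁, hABv⟩ :=
    A.normingSubmodule.exists_norm_eq_one_and_eq_zero_of_homogeneous
      (q := fun v => ⟪A v, B v⟫) (y := y) (z := z) (by fun_prop)
      (fun c v => by simp only [map_smul, real_inner_smul_left, real_inner_smul_right]; ring)
      (by simp [hy, hAy]) (by simp [hz, hAz])
      (norm_ne_zero_iff.1 (by simp [hy])) (norm_ne_zero_iff.1 (by simp [hz]))
      hpos (by simpa using hneg)
  exact ⟨v, hv₁, by simpa [hv₁] using mem_normingSubmodule.1 hv, hABv⟩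

end ContinuousLinearMap

end InnerProductSpace

theorem bilinear_form_birkhoff_orthogonality_general
    {H₁ : Type*} [NormedAddCommGroup H₁] [InnerProductSpace ℝ H₁]
    {H₂ : Type*} [NormedAddCommGroup H₂] [InnerProductSpace ℝ H₂] [FiniteDimensional ℝ H₂]
    (A B : H₂ →L[ℝ] H₁) (hA : A ≠ 0) :
    (∀ t : ℝ, bilinearFormNorm A ≤ bilinearFormNorm (A + t • B)) ↔
      ∃ x₀ : H₁, ∃ y₀ : H₂, ‖x₀‖ = 1 ∧ ‖y₀‖ = 1 ∧
        |(inner ℝ x₀ (A y₀) : ℝ)| = bilinearFormNorm A ∧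
        (inner ℝ x₀ (B y₀) : ℝ) = 0 := by
  simp only [bilinearFormNorm_eq_opNorm]
  constructor
  · intro h
    have : Nontrivial H₂ := by
      contrapose! hA
      exact Subsingleton.elim _ _
    obtain ⟨y, hy, hAy, hABy⟩ := A.exists_norm_apply_eq_and_inner_eq_zero B h
    have hA₀ : ‖A‖ ≠ 0 := norm_ne_zero_iff.2 hA
    refine ⟨‖A‖⁻¹ • A y, y, ?_, hy, ?_, ?_⟩
    · rw [norm_smul, norm_inv, norm_norm, hAy, inv_mul_cancel₀ hA₀]
    · rw [real_inner_smul_left, real_inner_self_eq_norm_sq, hAy, abs_of_nonneg (by positivity)]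
      field_simp
    · rw [real_inner_smul_left, hABy, mul_zero]
  · rintro ⟨x, y, hx, hy, hAxy, hBxy⟩ t
    calc ‖A‖ = |⟪x, (A + t • B) y⟫| := by
          simp [inner_add_right, real_inner_smul_right, hAxy, hBxy]
      _ ≤ ‖A + t • B‖ := abs_inner_apply_le_opNorm _ hx hy

/-- **Theorem 2.8 (Bilinearform).** For finite-dimensional real Hilbert spaces `H₁, H₂`
and non-zero linear maps `A, B : H₂ → H₁`, the bilinear form `T_A` is Birkhoff–James
orthogonal to `T_B` iff there exists `(x₀, y₀) ∈ M_{T_A}` with `⟪x₀, B y₀⟫ = 0`. -/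
theorem bilinear_form_birkhoff_orthogonality
    {H₁ : Type*} [NormedAddCommGroup H₁] [InnerProductSpace ℝ H₁] [FiniteDimensional ℝ H₁]
    {H₂ : Type*} [NormedAddCommGroup H₂] [InnerProductSpace ℝ H₂] [FiniteDimensional ℝ H₂]
    (A B : H₂ →L[ℝ] H₁) (hA : A ≠ 0) (hB : B ≠ 0) :
    (∀ t : ℝ, bilinearFormNorm A ≤ bilinearFormNorm (A + t • B)) ↔
      ∃ x₀ : H₁, ∃ y₀ : H₂, ‖x₀‖ = 1 ∧ ‖y₀‖ = 1 ∧
        |(inner ℝ x₀ (A y₀) : ℝ)| = bilinearFormNorm A ∧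
        (inner ℝ x₀ (B y₀) : ℝ) = 0 :=
  bilinear_form_birkhoff_orthogonality_general A B hA
end

section
/- (Bhatia–Šemrl Theorem, real case) Let H be an n-dimensional real Hilbert space with n > 1, and let A, B be linear operators on H. Then A is Birkhoff–James orthogonal to B in the operator norm, i.e., ‖A + λB‖ ≥ ‖A‖ for all real λ, if and only if there exists a unit vector y₀ ∈ H such that ‖Ay₀‖ = ‖A‖ and ⟨Ay₀, By₀⟩ = 0. -/
/-!
For `t > 0` let `x_t` be a unit vector at which `A + t • B` attains its norm. Expanding
`‖A‖² ≤ ‖A x_t + t • B x_t‖²` with `‖A x_t‖ ≤ ‖A‖` gives `0 ≤ 2 ⟪A x_t, B x_t⟫ + t ‖B‖²`, so a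
limit point `y` of `x_t` as `t → 0⁺` attains the norm of `A` and has `⟪A y, B y⟫ ≥ 0`; running
the same argument with `-B` gives such a `z` with `⟪A z, B z⟫ ≤ 0`. By the equality case of
Cauchy–Schwarz, the unit vectors at which `A` attains its norm are exactly the unit vectors of the
eigenspace of `A† A` for `‖A‖²`. As `x ↦ ⟪A x, B x⟫` is even, the intermediate value theorem on
the normalized segment from `y` to `z` (or `y` itself when `z = -y`) yields `y₀`.
-/

theorem exists_mem_norm_eq_one_eq_zero_of_even {V : Type*} [NormedAddCommGroup V]
    [NormedSpace ℝ V] {S : Submodule ℝ V} {f : V → ℝ} (hf : Continuous f)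
    (hf_neg : ∀ x, f (-x) = f x) {y z : V} (hyS : y ∈ S) (hzS : z ∈ S) (hy : ‖y‖ = 1)
    (hz : ‖z‖ = 1) (hfy : 0 ≤ f y) (hfz : f z ≤ 0) : ∃ w ∈ S, ‖w‖ = 1 ∧ f w = 0 := by
  by_cases hzy : z = -y
  · exact ⟨y, hyS, hy, le_antisymm (by simpa [hzy, hf_neg] using hfz) hfy⟩
  have hne : ∀ v ∈ segment ℝ y z, v ≠ 0 := by
    rintro v hv rfl
    have hray := mem_segment_iff_sameRay.mp hv
    rw [zero_sub, sub_zero] at hray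
    exact hzy (hray.eq_of_norm_eq (by rw [norm_neg, hy, hz])).symm
  let N : V → V := fun v => ‖v‖⁻¹ • v
  have hN : ContinuousOn N (segment ℝ y z) :=
    (continuousOn_id.norm.inv₀ fun v hv => norm_ne_zero_iff.mpr (hne v hv)).smul
      continuousOn_id
  obtain ⟨_, ⟨v, hv, rfl⟩, hfv⟩ :=
    ((convex_segment y z).isPreconnected.image N hN).intermediate_value
      ⟨z, right_mem_segment .., by simp [N, hz]⟩ ⟨y, left_mem_segment .., by simp [N, hy]⟩
      hf.continuousOn ⟨hfz, hfy⟩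
  exact ⟨N v, S.smul_mem _ (S.convex.segment_subset hyS hzS hv), norm_smul_inv_norm (hne v hv),
    hfv⟩

namespace ContinuousLinearMap

theorem exists_norm_eq_one_norm_apply_eq_opNorm {E F : Type*} [NormedAddCommGroup E]
    [NormedSpace ℝ E] [Nontrivial E] [FiniteDimensional ℝ E] [NormedAddCommGroup F]
    [NormedSpace ℝ F] (f : E →L[ℝ] F) : ∃ x, ‖x‖ = 1 ∧ ‖f x‖ = ‖f‖ := by
  have hK := (isCompact_sphere (0 : E) 1).image f.continuous.norm
  obtain ⟨x, hx, hfx⟩ := hK.sSup_mem ((NormedSpace.sphere_nonempty.mpr zero_le_one).image _)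
  exact ⟨x, by simpa using hx, hfx.trans f.sSup_sphere_eq_norm⟩

variable {H : Type*} [NormedAddCommGroup H] [InnerProductSpace ℝ H]

theorem opNorm_le_norm_add_smul_of_inner_eq_zero {A B : H →L[ℝ] H} {y : H} (hy : ‖y‖ = 1)
    (hAy : ‖A y‖ = ‖A‖) (hAB : inner ℝ (A y) (B y) = 0) (t : ℝ) : ‖A‖ ≤ ‖A + t • B‖ :=
  calc ‖A‖ = ‖A y‖ := hAy.symm
    _ ≤ ‖A y + t • B y‖ := by
      rw [← sq_le_sq₀ (norm_nonneg _) (norm_nonneg _), norm_add_sq_real, real_inner_smul_right,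
        hAB, mul_zero, mul_zero, add_zero]
      exact le_add_of_nonneg_right (sq_nonneg _)
    _ = ‖(A + t • B) y‖ := rfl
    _ ≤ ‖A + t • B‖ := by simpa [hy] using (A + t • B).le_opNorm y

theorem two_mul_inner_add_mul_sq_nonneg {A B : H →L[ℝ] H} {x : H} (hx : ‖x‖ ≤ 1) {t : ℝ}
    (ht : 0 < t) (h : ‖A‖ ≤ ‖A x + t • B x‖) :
    0 ≤ 2 * inner ℝ (A x) (B x) + t * ‖B‖ ^ 2 := by
  have hAx : ‖A x‖ ≤ ‖A‖ := by simpa using A.le_of_opNorm_le_of_le le_rfl hx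
  have hBx : ‖B x‖ ≤ ‖B‖ := by simpa using B.le_of_opNorm_le_of_le le_rfl hx
  have hexp : ‖A x + t • B x‖ ^ 2 =
      ‖A x‖ ^ 2 + t * (2 * inner ℝ (A x) (B x)) + t ^ 2 * ‖B x‖ ^ 2 := by
    rw [norm_add_sq_real, real_inner_smul_right, norm_smul, Real.norm_eq_abs, mul_pow, sq_abs]
    ring
  have : t * 0 ≤ t * (2 * inner ℝ (A x) (B x) + t * ‖B‖ ^ 2) := by
    nlinarith [pow_le_pow_left₀ (norm_nonneg _) h 2, pow_le_pow_left₀ (norm_nonneg _) hAx 2,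
      pow_le_pow_left₀ (norm_nonneg _) hBx 2]
  exact le_of_mul_le_mul_left this ht

theorem exists_norm_apply_eq_opNorm_inner_nonneg [FiniteDimensional ℝ H] [Nontrivial H]
    {A B : H →L[ℝ] H} (h : ∀ t : ℝ, 0 < t → ‖A‖ ≤ ‖A + t • B‖) :
    ∃ y, ‖y‖ = 1 ∧ ‖A y‖ = ‖A‖ ∧ 0 ≤ inner ℝ (A y) (B y) := by
  let C : Set (ℝ × H) := {p | ‖p.2‖ = 1 ∧ ‖A‖ ≤ ‖A p.2 + p.1 • B p.2‖ ∧
    0 ≤ 2 * inner ℝ (A p.2) (B p.2) + p.1 * ‖B‖ ^ 2}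
  have hC : IsClosed C := by
    simp only [C, Set.ofPred_and]
    refine (isClosed_eq ?_ ?_).inter ((isClosed_le ?_ ?_).inter (isClosed_le ?_ ?_)) <;>
      fun_prop
  let t : ℕ → ℝ := fun k => 1 / (k + 1)
  have ht : ∀ k, 0 < t k := fun k => by positivity
  choose x hx hAx using fun k => (A + t k • B).exists_norm_eq_one_norm_apply_eq_opNorm
  obtain ⟨y, -, φ, hφ, hxy⟩ :=
    (isCompact_sphere (0 : H) 1).tendsto_subseq (x := x) fun k => by simpa using hx k
  have hxC : ∀ k, (t k, x k) ∈ C := fun k => by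
    have hle : ‖A‖ ≤ ‖A (x k) + t k • B (x k)‖ := (h (t k) (ht k)).trans_eq (hAx k).symm
    exact ⟨hx k, hle, two_mul_inner_add_mul_sq_nonneg (hx k).le (ht k) hle⟩
  obtain ⟨hy, hAy, hinner⟩ : ((0 : ℝ), y) ∈ C := hC.mem_of_tendsto
    ((tendsto_one_div_add_atTop_nhds_zero_nat.comp hφ.tendsto_atTop).prodMk_nhds hxy)
    (Filter.Eventually.of_forall fun k => hxC (φ k))
  simp only [zero_smul, add_zero, zero_mul] at hAy hinner
  exact ⟨y, hy, le_antisymm (by simpa [hy] using A.le_opNorm y) hAy, by linarith⟩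

theorem norm_apply_eq_opNorm_iff [CompleteSpace H] {A : H →L[ℝ] H} {x : H} (hx : ‖x‖ = 1) :
    ‖A x‖ = ‖A‖ ↔ adjoint A (A x) = ‖A‖ ^ 2 • x := by
  have hinner : inner ℝ (adjoint A (A x)) x = ‖A x‖ ^ 2 := by
    rw [adjoint_inner_left, real_inner_self_eq_norm_sq]
  constructor
  · intro hAx
    set v := adjoint A (A x)
    have hv : ‖v‖ ≤ ‖A‖ ^ 2 := by
      simpa [hAx, sq, LinearIsometryEquiv.norm_map] using (adjoint A).le_opNorm (A x)
    have hCS : inner ℝ v x ≤ ‖v‖ * ‖x‖ := real_inner_le_norm v x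
    have hnorm : ‖v‖ = ‖A‖ ^ 2 := by rw [hinner, hAx, hx, mul_one] at hCS; linarith
    have := inner_eq_norm_mul_iff_real.mp (by rw [hinner, hnorm, hAx, hx, mul_one])
    rwa [hx, one_smul, hnorm] at this
  · intro heig
    rw [heig, real_inner_smul_left, real_inner_self_eq_norm_sq, hx] at hinner
    exact (sq_eq_sq₀ (norm_nonneg _) (norm_nonneg _)).mp (by linarith)

end ContinuousLinearMap

open ContinuousLinearMap in
/-- **Theorem 2.9 (Bhatia–Šemrl, real case).** For linear operators `A, B` on an
`n`-dimensional real Hilbert space `H` with `n > 1`: `A ⊥_B B` in the operator norm iff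
there exists a unit vector `y₀` with `‖A y₀‖ = ‖A‖` and `⟪A y₀, B y₀⟫ = 0`. -/
theorem bhatia_semrl_real
    {H : Type*} [NormedAddCommGroup H] [InnerProductSpace ℝ H]
    [FiniteDimensional ℝ H] {n : ℕ} (hn : 1 < n)
    (hdim : Module.finrank ℝ H = n)
    (A B : H →L[ℝ] H) :
    (∀ t : ℝ, ‖A‖ ≤ ‖A + t • B‖) ↔
      ∃ y₀ : H, ‖y₀‖ = 1 ∧ ‖A y₀‖ = ‖A‖ ∧ (inner ℝ (A y₀) (B y₀) : ℝ) = 0 := by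
  have : Nontrivial H := Module.nontrivial_of_finrank_pos (R := ℝ) (by omega)
  refine ⟨fun h => ?_, fun ⟨y₀, hy₀, hAy₀, hAB⟩ =>
    opNorm_le_norm_add_smul_of_inner_eq_zero hy₀ hAy₀ hAB⟩
  obtain ⟨y, hy, hAy, hfy⟩ := exists_norm_apply_eq_opNorm_inner_nonneg fun t _ => h t
  obtain ⟨z, hz, hAz, hfz⟩ :=
    exists_norm_apply_eq_opNorm_inner_nonneg (B := -B) fun t _ => by simpa using h (-t)
  let E := Module.End.eigenspace (adjoint A ∘L A : H →L[ℝ] H).toLinearMap (‖A‖ ^ 2)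
  have hE {x : H} (hx : ‖x‖ = 1) : x ∈ E ↔ ‖A x‖ = ‖A‖ := by
    rw [Module.End.mem_eigenspace_iff, norm_apply_eq_opNorm_iff hx]
    rfl
  obtain ⟨w, hwE, hw, hfw⟩ := exists_mem_norm_eq_one_eq_zero_of_even
    (f := fun x => inner ℝ (A x) (B x)) (by fun_prop) (fun x => by simp)
    ((hE hy).2 hAy) ((hE hz).2 hAz) hy hz hfy (by simpa using hfz)
  exact ⟨w, hw, (hE hw).1 hwE, hfw⟩
end
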